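/- arXiv:1307.0343 — 2 statements merged into one kernel-verified Lean document; each statement's English description precedes it below -/
import Mathlib

section
/- Let f : (0,∞) → ℝ be measurable and let f̃ denote its Laplace transform, f̃(z) = ∫_0^∞ f(t) e^{−zt} dt. Suppose there exist positive reals δ and ε such that: (1) f̃ extends to a function analytic on {z = x + iy : |x| < δ + ε} ∖ {0}; (2) f̃ has a simple pole at 0 with residue C, i.e. z ↦ f̃(z) − C/z extends analytically across 0; (3) ∫_{−∞}^∞ |f̃(δ + iy)| dy < ∞; (4) f̃(x + iy) → 0 as y → ±∞, uniformly in x ∈ [−δ, δ]; (5) ψ := ∫_{−∞}^∞ |f̃(−δ + iy)| dy < ∞; and (6) the Laplace inversion formula holds: for every t > 0, f(t) = (1/(2πi)) lim_{β→∞} ∫_{δ−iβ}^{δ+iβ} f̃(z) e^{zt} dz. Then for all t > 0, |f(t) − C| ≤ (ψ/(2π)) e^{−δt}. -/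
/-!
Shift the inversion contour from `Re z = δ` to `Re z = -δ`. Near the strip, `F(z) e^{zt}` is
`C/z` plus a holomorphic function, so by Cauchy's theorem its integral around the rectangle
`[-δ, δ] × [-β, β]` is `C` times that of `1/z`, which an explicit arctangent computation
shows to be `2πi`. The horizontal sides vanish as `β → ∞` by the uniform decay of `F`, so
`f(t) = C + (1/2π) ∫ F(-δ + iy) e^{(-δ + iy)t} dy`, and `|e^{(-δ + iy)t}| = e^{-δt}`.
-/

open MeasureTheory Filter Complex Set
open scoped Interval Topology

noncomputable section

theorem integral_inv_ofReal_add_mul_I {a : ℝ} (ha : a ≠ 0) (b : ℝ) :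
    ∫ y in -b..b, ((a : ℂ) + y * I)⁻¹ = 2 * Real.arctan (b / a) := by
  have hderiv (y : ℝ) : HasDerivAt
      (fun y : ℝ => (Real.arctan (y / a) : ℂ) - (Real.log (a ^ 2 + y ^ 2) / 2 : ℝ) * I)
      ((a : ℂ) + y * I)⁻¹ y := by
    have hpos : a ^ 2 + y ^ 2 ≠ 0 := by positivity
    have harctan := (Real.hasDerivAt_arctan (y / a)).comp y ((hasDerivAt_id y).div_const a)
    have hlog := ((Real.hasDerivAt_log hpos).comp y
      (((hasDerivAt_id y).pow 2).const_add (a ^ 2))).div_const 2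
    refine (harctan.ofReal_comp.sub (hlog.ofReal_comp.mul_const I)).congr_deriv ?_
    apply eq_inv_of_mul_eq_one_left
    have hpos' : (a : ℂ) ^ 2 + (y : ℂ) ^ 2 ≠ 0 := by exact_mod_cast hpos
    have ha' : (a : ℂ) ≠ 0 := by exact_mod_cast ha
    simp only [id]
    push_cast
    field_simp
    ring_nf
    rw [I_sq]
    ring
  have hcont : Continuous fun y : ℝ => ((a : ℂ) + y * I)⁻¹ :=
    (by fun_prop : Continuous fun y : ℝ => (a : ℂ) + y * I).inv₀ fun y h => by
      simpa [ha] using congrArg re h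
  rw [intervalIntegral.integral_eq_sub_of_hasDerivAt (fun y _ => hderiv y)
    (hcont.intervalIntegrable _ _)]
  simp only [neg_div, Real.arctan_neg, neg_sq]
  push_cast
  ring

theorem integral_inv_add_ofReal_mul_I (a : ℝ) {b : ℝ} (hb : b ≠ 0) :
    ∫ x in -a..a, ((x : ℂ) + b * I)⁻¹ = -2 * Real.arctan (a / b) * I := by
  -- `x + b I = I (b - x I)`: rotating by `I` turns the horizontal line into a vertical one.
  have hrot (x : ℝ) : ((x : ℂ) + b * I)⁻¹ = -I * ((b : ℂ) + ((-x : ℝ) : ℂ) * I)⁻¹ := by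
    rw [← inv_I, ← mul_inv]
    congr 1
    push_cast
    ring_nf
    rw [I_sq]
    ring
  simp only [hrot, intervalIntegral.integral_const_mul]
  rw [intervalIntegral.integral_comp_neg (fun y : ℝ => ((b : ℂ) + y * I)⁻¹), neg_neg,
    integral_inv_ofReal_add_mul_I hb]
  ring

def rectContourIntegral (f : ℂ → ℂ) (a b : ℝ) : ℂ :=
  (∫ x in -a..a, f (x - b * I)) - (∫ x in -a..a, f (x + b * I))
    + I * (∫ y in -b..b, f (a + y * I)) - I * ∫ y in -b..b, f (-a + y * I)

theorem rectContourIntegral_eq_zero_of_differentiableOn {f : ℂ → ℂ} {a b : ℝ}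
    (hf : DifferentiableOn ℂ f ([[-a, a]] ×ℂ [[-b, b]])) : rectContourIntegral f a b = 0 := by
  have := integral_boundary_rect_eq_zero_of_differentiableOn f (-a - b * I) (a + b * I)
    (by simpa using hf)
  simpa [rectContourIntegral, sub_eq_add_neg] using this

theorem rectContourIntegral_inv {a b : ℝ} (ha : 0 < a) (hb : 0 < b) :
    rectContourIntegral (·⁻¹) a b = 2 * Real.pi * I := by
  have hbot := integral_inv_add_ofReal_mul_I a (neg_ne_zero.2 hb.ne')
  have hleft := integral_inv_ofReal_add_mul_I (neg_ne_zero.2 ha.ne') b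
  simp only [ofReal_neg, neg_mul, ← sub_eq_add_neg] at hbot hleft
  rw [rectContourIntegral, hbot, hleft, integral_inv_add_ofReal_mul_I a hb.ne',
    integral_inv_ofReal_add_mul_I ha.ne']
  have harctan : Real.arctan (b / a) = Real.pi / 2 - Real.arctan (a / b) := by
    rw [← inv_div, Real.arctan_inv_of_pos (by positivity)]
  simp only [div_neg, Real.arctan_neg, harctan]
  push_cast
  ring

theorem intervalIntegral_comp_eq_mul_integral_inv_add {f H : ℂ → ℂ} {c : ℂ} {S : Set ℂ}
    (hH : ContinuousOn H S) (hf : ∀ z ∈ S, z ≠ 0 → f z = c * z⁻¹ + H z)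
    {γ : ℝ → ℂ} (hγ : Continuous γ) {u v : ℝ} (hγS : MapsTo γ [[u, v]] (S \ {0})) :
    ∫ s in u..v, f (γ s) = c * (∫ s in u..v, (γ s)⁻¹) + ∫ s in u..v, H (γ s) := by
  have hinv : IntervalIntegrable (fun s => (γ s)⁻¹) volume u v :=
    (hγ.continuousOn.inv₀ fun s hs => (hγS hs).2).intervalIntegrable
  have hHγ : IntervalIntegrable (fun s => H (γ s)) volume u v :=
    (hH.comp hγ.continuousOn fun s hs => (hγS hs).1).intervalIntegrable
  rw [← intervalIntegral.integral_const_mul,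
    ← intervalIntegral.integral_add (hinv.const_mul c) hHγ]
  exact intervalIntegral.integral_congr fun s hs => hf _ (hγS hs).1 (hγS hs).2

theorem rectContourIntegral_eq_of_eq_mul_inv_add {f H : ℂ → ℂ} {c : ℂ} {a b : ℝ}
    (ha : 0 < a) (hb : 0 < b) (hH : DifferentiableOn ℂ H ([[-a, a]] ×ℂ [[-b, b]]))
    (hf : ∀ z ∈ [[-a, a]] ×ℂ [[-b, b]], z ≠ 0 → f z = c * z⁻¹ + H z) :
    rectContourIntegral f a b = 2 * Real.pi * I * c := by
  have side := fun {γ : ℝ → ℂ} (hγ : Continuous γ) {u v : ℝ} (hγS : MapsTo γ [[u, v]] _) =>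
    intervalIntegral_comp_eq_mul_integral_inv_add hH.continuousOn hf hγ hγS
  have hmem : ∀ x ∈ [[-a, a]], ∀ y ∈ [[-b, b]], (x : ℂ) + y * I ∈ [[-a, a]] ×ℂ [[-b, b]] :=
    fun x hx y hy => by simpa [mem_reProdIm] using ⟨hx, hy⟩
  have hbot := side (γ := fun x : ℝ => (x : ℂ) - b * I) (by fun_prop) (u := -a) (v := a)
    fun x hx => ⟨by simpa [sub_eq_add_neg] using hmem x hx (-b) left_mem_uIcc,
      fun h => by simpa [hb.ne'] using congrArg im h⟩
  have htop := side (γ := fun x : ℝ => (x : ℂ) + b * I) (by fun_prop) (u := -a) (v := a)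
    fun x hx => ⟨hmem x hx b right_mem_uIcc, fun h => by simpa [hb.ne'] using congrArg im h⟩
  have hright := side (γ := fun y : ℝ => (a : ℂ) + y * I) (by fun_prop) (u := -b) (v := b)
    fun y hy => ⟨hmem a right_mem_uIcc y hy, fun h => by simpa [ha.ne'] using congrArg re h⟩
  have hleft := side (γ := fun y : ℝ => -(a : ℂ) + y * I) (by fun_prop) (u := -b) (v := b)
    fun y hy => ⟨by simpa using hmem (-a) left_mem_uIcc y hy,
      fun h => by simpa [ha.ne'] using congrArg re h⟩
  have hinv := rectContourIntegral_inv ha hb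
  have hcauchy := rectContourIntegral_eq_zero_of_differentiableOn hH
  simp only [rectContourIntegral] at hinv hcauchy ⊢
  rw [hbot, htop, hright, hleft]
  linear_combination c * hinv + hcauchy

theorem tendsto_intervalIntegral_of_rectContourIntegral {φ : ℂ → ℂ} {a : ℝ} {c L : ℂ}
    (hrect : ∀ᶠ β in atTop, rectContourIntegral φ a β = 2 * Real.pi * I * c)
    (hbot : Tendsto (fun β : ℝ => ∫ x in -a..a, φ (x - β * I)) atTop (𝓝 0))
    (htop : Tendsto (fun β : ℝ => ∫ x in -a..a, φ (x + β * I)) atTop (𝓝 0))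
    (hleft : Tendsto (fun β : ℝ => ∫ y in -β..β, φ (-a + y * I)) atTop (𝓝 L)) :
    Tendsto (fun β : ℝ => ∫ y in -β..β, φ (a + y * I)) atTop (𝓝 (2 * Real.pi * c + L)) := by
  have hlim := (tendsto_const_nhds (x := 2 * Real.pi * c)).add
    (hleft.add ((hbot.sub htop).const_mul I))
  rw [sub_self, mul_zero, add_zero] at hlim
  refine hlim.congr' ?_
  filter_upwards [hrect] with β hβ
  rw [rectContourIntegral] at hβ
  linear_combination I * hβ + (2 * Real.pi * c + (∫ y in -β..β, φ (-a + y * I))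
    - ∫ y in -β..β, φ (a + y * I)) * I_sq

theorem exists_mul_eq_mul_inv_add {F g e : ℂ → ℂ} {C : ℂ} {S : Set ℂ}
    (hg : DifferentiableOn ℂ g S) (he : Differentiable ℂ e)
    (hF : ∀ z ∈ S \ {0}, F z = C / z + g z) :
    ∃ H : ℂ → ℂ, DifferentiableOn ℂ H S ∧
      ∀ z ∈ S, z ≠ 0 → F z * e z = C * e 0 * z⁻¹ + H z := by
  have hslope : Differentiable ℂ (dslope e 0) := fun z =>
    ((differentiableOn_dslope univ_mem).2 he.differentiableOn z trivial).differentiableAt univ_mem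
  refine ⟨fun z => C * dslope e 0 z + g z * e z,
    (hslope.differentiableOn.const_mul C).add (hg.mul he.differentiableOn), fun z hz hz0 => ?_⟩
  dsimp only
  rw [hF z ⟨hz, hz0⟩, dslope_of_ne _ hz0, slope_def_field]
  field_simp
  ring

theorem tendsto_intervalIntegral_mul_cocompact {f k : ℂ → ℂ} {a K : ℝ} (ha : 0 ≤ a)
    (hf : ∀ c : ℝ, 0 < c → ∃ M : ℝ, ∀ x : ℝ, |x| ≤ a → ∀ y : ℝ, M ≤ |y| →
      ‖f (x + y * I)‖ ≤ c)
    (hk : ∀ z : ℂ, |z.re| ≤ a → ‖k z‖ ≤ K) :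
    Tendsto (fun y : ℝ => ∫ x in -a..a, f (x + y * I) * k (x + y * I)) (cocompact ℝ) (𝓝 0) := by
  rw [NormedAddGroup.tendsto_nhds_zero]
  intro ε hε
  have hK : 0 ≤ K := (norm_nonneg _).trans (hk 0 (by simpa using ha))
  set c := ε / (2 * a * K + 1)
  obtain ⟨M, hM⟩ := hf c (by positivity)
  filter_upwards [tendsto_norm_cocompact_atTop.eventually_ge_atTop M] with y hy
  have hbound : ∀ x ∈ Ι (-a) a, ‖f (x + y * I) * k (x + y * I)‖ ≤ c * K := fun x hx => by
    rw [uIoc_of_le (by linarith)] at hx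
    have hxa : |x| ≤ a := abs_le.2 ⟨hx.1.le, hx.2⟩
    rw [norm_mul]
    exact mul_le_mul (hM x hxa y hy) (hk _ (by simpa using hxa)) (norm_nonneg _)
      (by positivity)
  calc ‖∫ x in -a..a, f (x + y * I) * k (x + y * I)‖ ≤ c * K * |a - -a| :=
        intervalIntegral.norm_integral_le_of_norm_le_const hbound
    _ = 2 * a * K * ε / (2 * a * K + 1) := by
        rw [show a - -a = 2 * a by ring, abs_of_nonneg (by linarith)]
        ring
    _ < ε := by
        rw [div_lt_iff₀ (by positivity)]
        nlinarith

theorem norm_cexp_ofReal_add_mul_I_mul (x y t : ℝ) :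
    ‖exp ((x + y * I) * t)‖ = Real.exp (x * t) := by
  simp [norm_exp]

theorem norm_cexp_mul_ofReal_le {z : ℂ} {a t : ℝ} (hz : |z.re| ≤ a) (ht : 0 ≤ t) :
    ‖exp (z * t)‖ ≤ Real.exp (a * t) := by
  rw [norm_exp, Real.exp_le_exp]
  simpa using mul_le_mul_of_nonneg_right (le_of_abs_le hz) ht

theorem integrable_mul_cexp_vertical {F : ℂ → ℂ} {a : ℝ}
    (hF : Integrable fun y : ℝ => F (a + y * I)) (t : ℝ) :
    Integrable fun y : ℝ => F (a + y * I) * exp ((a + y * I) * t) :=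
  hF.mul_bdd (by fun_prop) (Eventually.of_forall fun y =>
    (norm_cexp_ofReal_add_mul_I_mul a y t).le)

theorem norm_integral_mul_cexp_vertical_le (F : ℂ → ℂ) (a t : ℝ) :
    ‖∫ y : ℝ, F (a + y * I) * exp ((a + y * I) * t)‖
      ≤ (∫ y : ℝ, ‖F (a + y * I)‖) * Real.exp (a * t) :=
  calc ‖∫ y : ℝ, F (a + y * I) * exp ((a + y * I) * t)‖
      ≤ ∫ y : ℝ, ‖F (a + y * I) * exp ((a + y * I) * t)‖ := norm_integral_le_integral_norm _
    _ = (∫ y : ℝ, ‖F (a + y * I)‖) * Real.exp (a * t) := by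
      simp only [norm_mul, norm_cexp_ofReal_add_mul_I_mul, integral_mul_const]

theorem uIcc_reProdIm_subset_abs_re_lt {a ε : ℝ} (ha : 0 ≤ a) (hε : 0 < ε) (s : Set ℝ) :
    [[-a, a]] ×ℂ s ⊆ {z : ℂ | |z.re| < a + ε} := fun z hz => by
  have hre := (mem_reProdIm.1 hz).1
  rw [uIcc_of_le (by linarith)] at hre
  exact (abs_le.2 hre).trans_lt (by linarith)

theorem stmt3_general (f : ℝ → ℝ) (F : ℂ → ℂ) (C : ℝ) (δ ε : ℝ) (hδ : 0 < δ) (hε : 0 < ε)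
    -- (2) F has a simple pole at 0 with residue C
    (hpole : ∃ g : ℂ → ℂ, AnalyticOnNhd ℂ g {z : ℂ | |z.re| < δ + ε} ∧
      ∀ z ∈ ({z : ℂ | |z.re| < δ + ε} \ {0} : Set ℂ), F z = (C : ℂ) / z + g z)
    -- (4) F(x+iy) → 0 as y → ±∞, uniformly in x ∈ [−δ, δ]
    (h4 : ∀ c : ℝ, 0 < c → ∃ M : ℝ, ∀ x : ℝ, |x| ≤ δ → ∀ y : ℝ, M ≤ |y| →
      ‖F (x + y * Complex.I)‖ ≤ c)
    -- (5) integrability on the line Re z = −δ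
    (h5 : Integrable fun y : ℝ => F (-δ + y * Complex.I))
    -- (6) Laplace inversion formula
    (h6 : ∀ t : ℝ, 0 < t →
      Tendsto (fun β : ℝ => (1 / (2 * Real.pi * Complex.I)) *
          ∫ y in -β..β, F (δ + y * Complex.I) * Complex.exp ((δ + y * Complex.I) * t)
            * Complex.I)
        atTop (nhds ((f t : ℝ) : ℂ))) :
    ∀ t : ℝ, 0 < t →
      |f t - C| ≤ ((∫ y : ℝ, ‖F (-δ + y * Complex.I)‖) / (2 * Real.pi))
        * Real.exp (-δ * t) := by
  intro t ht
  obtain ⟨g, hg, hFg⟩ := hpole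
  obtain ⟨H, hH, hFH⟩ := exists_mul_eq_mul_inv_add (e := fun z => exp (z * t))
    hg.differentiableOn (by fun_prop) hFg
  have hrect (β : ℝ) := uIcc_reProdIm_subset_abs_re_lt hδ.le hε [[-β, β]]
  have hcontour : ∀ᶠ β in atTop,
      rectContourIntegral (fun z => F z * exp (z * t)) δ β = 2 * Real.pi * I * C := by
    filter_upwards [eventually_gt_atTop 0] with β hβ
    simpa using rectContourIntegral_eq_of_eq_mul_inv_add hδ hβ (hH.mono (hrect β))
      fun z hz => hFH z (hrect β hz)
  have hhoriz := tendsto_intervalIntegral_mul_cocompact (k := fun z => exp (z * t)) hδ.le h4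
    fun z hz => norm_cexp_mul_ofReal_le hz ht.le
  have htop := hhoriz.comp (tendsto_id.mono_right atTop_le_cocompact)
  have hbot := hhoriz.comp (tendsto_neg_atTop_atBot.mono_right atBot_le_cocompact)
  simp only [Function.comp_def, id, ofReal_neg, neg_mul, ← sub_eq_add_neg] at htop hbot
  have hleft := integrable_mul_cexp_vertical (a := -δ) (by simpa using h5) t
  simp only [ofReal_neg] at hleft
  set L := ∫ y : ℝ, F (-δ + y * I) * exp ((-δ + y * I) * t)
  have hright := tendsto_intervalIntegral_of_rectContourIntegral (L := L) hcontour hbot htop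
    (intervalIntegral_tendsto_integral hleft tendsto_neg_atTop_atBot tendsto_id)
  have hinv := h6 t ht
  simp only [intervalIntegral.integral_mul_const] at hinv
  have hft : (f t : ℂ) = C + L / (2 * Real.pi) := by
    rw [tendsto_nhds_unique hinv ((hright.mul_const I).const_mul _)]
    field_simp
  have hψ := norm_integral_mul_cexp_vertical_le F (-δ) t
  simp only [ofReal_neg] at hψ
  calc |f t - C| = ‖L‖ / (2 * Real.pi) := by
        rw [← Real.norm_eq_abs, ← norm_real, ofReal_sub, hft, add_sub_cancel_left, norm_div,
          show (2 * Real.pi : ℂ) = (2 * Real.pi : ℝ) by push_cast; ring, norm_real,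
          Real.norm_of_nonneg Real.two_pi_pos.le]
    _ ≤ (∫ y : ℝ, ‖F (-δ + y * I)‖) * Real.exp (-δ * t) / (2 * Real.pi) := by gcongr
    _ = _ := by ring

/-- Lemma 2.6 (a Tauberian-type lemma): if the (analytically extended) Laplace transform
`F` of `f` is analytic on the strip `{|Re z| < δ + ε}` except for a simple pole at `0`
with residue `C`, is integrable on the vertical lines `Re z = ±δ`, tends to `0` as
`Im z → ±∞` uniformly on `|Re z| ≤ δ`, and the Laplace inversion formula holds on the
line `Re z = δ`, then `|f(t) − C| ≤ (ψ/(2π)) e^{−δ t}` for all `t > 0`, where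
`ψ = ∫ |F(−δ + iy)| dy`. -/
theorem stmt3 (f : ℝ → ℝ) (F : ℂ → ℂ) (C : ℝ) (δ ε : ℝ) (hδ : 0 < δ) (hε : 0 < ε)
    -- (1) F is analytic on the strip minus the origin
    (hF : AnalyticOnNhd ℂ F ({z : ℂ | |z.re| < δ + ε} \ {0}))
    -- (2) F has a simple pole at 0 with residue C
    (hpole : ∃ g : ℂ → ℂ, AnalyticOnNhd ℂ g {z : ℂ | |z.re| < δ + ε} ∧
      ∀ z ∈ ({z : ℂ | |z.re| < δ + ε} \ {0} : Set ℂ), F z = (C : ℂ) / z + g z)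
    -- (3) integrability on the line Re z = δ
    (h3 : Integrable fun y : ℝ => F (δ + y * Complex.I))
    -- (4) F(x+iy) → 0 as y → ±∞, uniformly in x ∈ [−δ, δ]
    (h4 : ∀ c : ℝ, 0 < c → ∃ M : ℝ, ∀ x : ℝ, |x| ≤ δ → ∀ y : ℝ, M ≤ |y| →
      ‖F (x + y * Complex.I)‖ ≤ c)
    -- (5) integrability on the line Re z = −δ
    (h5 : Integrable fun y : ℝ => F (-δ + y * Complex.I))
    -- (6) Laplace inversion formula
    (h6 : ∀ t : ℝ, 0 < t →
      Tendsto (fun β : ℝ => (1 / (2 * Real.pi * Complex.I)) *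
          ∫ y in -β..β, F (δ + y * Complex.I) * Complex.exp ((δ + y * Complex.I) * t)
            * Complex.I)
        atTop (nhds ((f t : ℝ) : ℂ))) :
    ∀ t : ℝ, 0 < t →
      |f t - C| ≤ ((∫ y : ℝ, ‖F (-δ + y * Complex.I)‖) / (2 * Real.pi))
        * Real.exp (-δ * t) :=
  stmt3_general f F C δ ε hδ hε hpole h4 h5 h6
end
end

section
/- Let (X, Y) be a centered Gaussian vector with Var(X) = Var(Y) = 1 and Cov(X, Y) = ρ ∈ (−1,1). Let a ∈ ℝ, b ≠ 0, c ∈ ℝ, and set T = a + b(X+c)², Tʹ = a + b(Y+c)². Then the correlation of T and Tʹ equals (ρ² + 2c²ρ)/(1 + 2c²). -/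
/-!
Gaussian integration by parts gives `E[Z ^ (n + 2)] = (n + 1) v E[Z ^ n]` for `Z ~ N(0, v)`, and
symmetry kills the odd moments. Since `X + Y` and `X - Y` are centered Gaussians of variances
`2 ± 2ρ`, expanding their moments of order 2, 3, 4 yields `E[XY] = ρ`, `E[X²Y] = E[XY²] = 0` and
`E[X²Y²] = 1 + 2ρ²`. Writing `T = (a + bc²) + 2bc X + b X²` and similarly `T'`, bilinearity of the
covariance gives `Cov(T, T') = 2b²ρ(ρ + 2c²)`; the variances are the case of the pair `(X, X)`,
whose correlation is `1`.
-/

open MeasureTheory ProbabilityTheory Finset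
open scoped NNReal

section GaussianMoments

lemma integrable_pow_gaussianReal (μ : ℝ) (v : ℝ≥0) (n : ℕ) :
    Integrable (fun x : ℝ => x ^ n) (gaussianReal μ v) :=
  ((memLp_id_gaussianReal n).integrable_norm_pow').mono' (by fun_prop)
    (ae_of_all _ fun x => by simp [norm_pow])

lemma integrable_gaussianPDFReal_mul_pow {v : ℝ≥0} (hv : v ≠ 0) (n : ℕ) :
    Integrable (fun x => gaussianPDFReal 0 v x * x ^ n) := by
  have h := integrable_pow_gaussianReal 0 v n
  rw [gaussianReal_of_var_ne_zero _ hv, gaussianPDF_def, integrable_withDensity_iff_integrable_smul'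
    (by fun_prop) (ae_of_all _ fun _ => ENNReal.ofReal_lt_top)] at h
  simpa [ENNReal.toReal_ofReal (gaussianPDFReal_nonneg _ _ _)] using h

lemma hasDerivAt_gaussianPDFReal_zero (v : ℝ≥0) (x : ℝ) :
    HasDerivAt (gaussianPDFReal 0 v) (-(x / v * gaussianPDFReal 0 v x)) x := by
  have h : HasDerivAt (fun x : ℝ => -x ^ 2 / (2 * v)) (-(2 * x) / (2 * v)) x := by
    simpa using (hasDerivAt_pow 2 x).fun_neg.div_const (2 * (v : ℝ))
  simp only [gaussianPDFReal_def, sub_zero]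
  refine (h.exp.const_mul _).congr_deriv ?_
  ring

/- Integration by parts: `φ x * x ^ (n + 1)` has derivative
`(n + 1) φ x * x ^ n - φ x * x ^ (n + 2) / v`, whose integral over `ℝ` vanishes. -/
lemma integral_pow_add_two_gaussianReal (v : ℝ≥0) (n : ℕ) :
    ∫ x, x ^ (n + 2) ∂gaussianReal 0 v = (n + 1) * v * ∫ x, x ^ n ∂gaussianReal 0 v := by
  rcases eq_or_ne v 0 with rfl | hv
  · simp
  set φ := gaussianPDFReal 0 v
  have hint := integrable_gaussianPDFReal_mul_pow hv
  have hderiv : ∀ x, HasDerivAt (fun x => φ x * x ^ (n + 1))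
      ((n + 1) * (φ x * x ^ n) - (v : ℝ)⁻¹ * (φ x * x ^ (n + 2))) x := fun x =>
    ((hasDerivAt_gaussianPDFReal_zero v x).mul (hasDerivAt_pow (n + 1) x)).congr_deriv
      (by push_cast; ring)
  have hparts := integral_eq_zero_of_hasDerivAt_of_integrable hderiv
    (((hint n).const_mul _).sub ((hint (n + 2)).const_mul _)) (hint (n + 1))
  rw [integral_sub ((hint n).const_mul _) ((hint (n + 2)).const_mul _), integral_const_mul,
    integral_const_mul, sub_eq_zero] at hparts
  simp only [integral_gaussianReal_eq_integral_smul hv, smul_eq_mul]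
  have hv' : (v : ℝ) ≠ 0 := by exact_mod_cast hv
  field_simp at hparts ⊢
  linarith

lemma integral_pow_gaussianReal_of_odd (v : ℝ≥0) {n : ℕ} (hn : Odd n) :
    ∫ x, x ^ n ∂gaussianReal 0 v = 0 := by
  have h : ∫ x, x ^ n ∂gaussianReal 0 v = ∫ x, (-x) ^ n ∂gaussianReal 0 v := by
    conv_lhs => rw [← neg_zero, ← gaussianReal_map_neg]
    exact integral_map (by fun_prop) (by fun_prop)
  simp only [hn.neg_pow, integral_neg] at h
  linarith

lemma integral_sq_gaussianReal (v : ℝ≥0) : ∫ x, x ^ 2 ∂gaussianReal 0 v = v := by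
  simpa using integral_pow_add_two_gaussianReal v 0

lemma integral_pow_four_gaussianReal (v : ℝ≥0) :
    ∫ x, x ^ 4 ∂gaussianReal 0 v = 3 * (v : ℝ) ^ 2 := by
  rw [integral_pow_add_two_gaussianReal v 2, integral_sq_gaussianReal]
  push_cast
  ring

end GaussianMoments

lemma integral_mul_add_mul_pow {Ω : Type*} [MeasurableSpace Ω] {P : Measure Ω} {X Y : Ω → ℝ}
    (hXY : ∀ i j, Integrable (fun ω => X ω ^ i * Y ω ^ j) P) (s t : ℝ) (n : ℕ) :
    ∫ ω, (s * X ω + t * Y ω) ^ n ∂P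
      = ∑ k ∈ range (n + 1),
          s ^ k * t ^ (n - k) * n.choose k * ∫ ω, X ω ^ k * Y ω ^ (n - k) ∂P := by
  simp_rw [add_pow]
  rw [integral_finsetSum _ fun k _ => ?_]
  · refine sum_congr rfl fun k _ => ?_
    rw [← integral_const_mul]
    congr 1 with ω
    ring
  · exact ((hXY k (n - k)).const_mul (s ^ k * t ^ (n - k) * n.choose k)).congr
      (ae_of_all _ fun ω => by simp only; ring)

lemma add_mul_add_sq_eq_sum {Ω : Type*} (X : Ω → ℝ) (a b c : ℝ) :
    (fun ω => a + b * (X ω + c) ^ 2)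
      = fun ω => ∑ i : Fin 3, ![a + b * c ^ 2, 2 * b * c, b] i * X ω ^ (i : ℕ) := by
  ext ω
  simp only [Fin.sum_univ_three, Fin.isValue, Matrix.cons_val_zero, Matrix.cons_val_one,
    Matrix.cons_val, Fin.coe_ofNat_eq_mod, Nat.zero_mod, Nat.one_mod, Nat.mod_succ, pow_zero,
    pow_one]
  ring

/-- A centered Gaussian vector `(X, Y)` with unit variances and correlation `ρ`, given through the
laws of all linear combinations `s X + t Y` (Cramér–Wold). -/
def IsStdGaussianPair {Ω : Type*} [MeasurableSpace Ω] (X Y : Ω → ℝ) (ρ : ℝ)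
    (P : Measure Ω) : Prop :=
  ∀ s t : ℝ, P.map (fun ω => s * X ω + t * Y ω)
    = gaussianReal 0 (Real.toNNReal (s ^ 2 + t ^ 2 + 2 * s * t * ρ))

namespace IsStdGaussianPair

variable {Ω : Type*} [MeasurableSpace Ω] {P : Measure Ω} {X Y : Ω → ℝ} {ρ : ℝ}

lemma swap (h : IsStdGaussianPair X Y ρ P) : IsStdGaussianPair Y X ρ P := fun s t => by
  convert h t s using 3 <;> ring

lemma hasLaw (h : IsStdGaussianPair X Y ρ P) (s t : ℝ) :
    HasLaw (fun ω => s * X ω + t * Y ω)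
      (gaussianReal 0 (Real.toNNReal (s ^ 2 + t ^ 2 + 2 * s * t * ρ))) P where
  aemeasurable := .of_map_ne_zero (by rw [h s t]; exact IsProbabilityMeasure.ne_zero _)
  map_eq := h s t

lemma hasLaw_fst (h : IsStdGaussianPair X Y ρ P) : HasLaw X (gaussianReal 0 1) P := by
  simpa using h.hasLaw 1 0

lemma of_hasLaw (hX : HasLaw X (gaussianReal 0 1) P) : IsStdGaussianPair X X 1 P := fun s t => by
  have hmul : HasLaw (fun x => (s + t) * x)
      (gaussianReal 0 (Real.toNNReal (s ^ 2 + t ^ 2 + 2 * s * t * 1))) (gaussianReal 0 1) := by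
    refine ⟨by fun_prop, ?_⟩
    rw [gaussianReal_map_const_mul]
    congr 1
    · simp
    · ext
      rw [show s ^ 2 + t ^ 2 + 2 * s * t * 1 = (s + t) ^ 2 by ring]
      simp [Real.coe_toNNReal _ (sq_nonneg (s + t))]
  convert (hmul.comp hX).map_eq using 2
  ext ω
  simp only [Function.comp_apply]
  ring

lemma integral_pow (h : IsStdGaussianPair X Y ρ P) (s t : ℝ) (n : ℕ) :
    ∫ ω, (s * X ω + t * Y ω) ^ n ∂P
      = ∫ x, x ^ n ∂gaussianReal 0 (Real.toNNReal (s ^ 2 + t ^ 2 + 2 * s * t * ρ)) :=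
  (h.hasLaw s t).integral_comp (f := fun x => x ^ n) (by fun_prop)

lemma integral_fst_pow (h : IsStdGaussianPair X Y ρ P) (n : ℕ) :
    ∫ ω, X ω ^ n ∂P = ∫ x, x ^ n ∂gaussianReal 0 1 :=
  h.hasLaw_fst.integral_comp (f := fun x => x ^ n) (by fun_prop)

lemma integral_fst (h : IsStdGaussianPair X Y ρ P) : ∫ ω, X ω ∂P = 0 := by
  simpa using (h.integral_fst_pow 1).trans (integral_pow_gaussianReal_of_odd 1 odd_one)

lemma memLp_pow (h : IsStdGaussianPair X Y ρ P) (n : ℕ) : MemLp (fun ω => X ω ^ n) 2 P := by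
  have hX := h.hasLaw_fst
  refine (memLp_two_iff_integrable_sq
    (hX.aemeasurable.pow_const n).aestronglyMeasurable).2 ?_
  have := (integrable_map_measure (by fun_prop) hX.aemeasurable).1
    (hX.map_eq ▸ integrable_pow_gaussianReal 0 1 (2 * n))
  simpa [Function.comp_def, ← pow_mul, mul_comm] using this

lemma integrable_pow_mul_pow (h : IsStdGaussianPair X Y ρ P) (i j : ℕ) :
    Integrable (fun ω => X ω ^ i * Y ω ^ j) P :=
  (h.memLp_pow i).integrable_mul (h.swap.memLp_pow j)

lemma integral_mul (h : IsStdGaussianPair X Y ρ P) (hρ : -1 ≤ ρ) :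
    ∫ ω, X ω * Y ω ∂P = ρ := by
  have hS := h.integral_pow 1 1 2
  rw [integral_mul_add_mul_pow h.integrable_pow_mul_pow, integral_sq_gaussianReal,
    Real.coe_toNNReal _ (by linarith)] at hS
  have hS' : 1 + 2 * ∫ ω, X ω * Y ω ∂P + 1 = 2 + 2 * ρ := by
    simpa [sum_range_succ, h.integral_fst_pow, h.swap.integral_fst_pow, integral_sq_gaussianReal,
      one_add_one_eq_two] using hS
  linarith

lemma integral_sq_mul (h : IsStdGaussianPair X Y ρ P) : ∫ ω, X ω ^ 2 * Y ω ∂P = 0 := by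
  have hS := h.integral_pow 1 1 3
  have hD := h.integral_pow 1 (-1) 3
  rw [integral_mul_add_mul_pow h.integrable_pow_mul_pow,
    integral_pow_gaussianReal_of_odd _ (by decide)] at hS hD
  have hX3 := (h.integral_fst_pow 3).trans (integral_pow_gaussianReal_of_odd _ (by decide))
  have hY3 := (h.swap.integral_fst_pow 3).trans (integral_pow_gaussianReal_of_odd _ (by decide))
  have hS' : 3 * ∫ ω, X ω * Y ω ^ 2 ∂P + 3 * ∫ ω, X ω ^ 2 * Y ω ∂P = 0 := by
    simpa [sum_range_succ, hX3, hY3] using hS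
  have hD' : 3 * ∫ ω, X ω * Y ω ^ 2 ∂P - 3 * ∫ ω, X ω ^ 2 * Y ω ∂P = 0 := by
    simpa [sum_range_succ, hX3, hY3, sub_eq_add_neg] using hD
  linarith

lemma integral_mul_sq (h : IsStdGaussianPair X Y ρ P) : ∫ ω, X ω * Y ω ^ 2 ∂P = 0 := by
  simpa [mul_comm] using h.swap.integral_sq_mul

lemma integral_sq_mul_sq (h : IsStdGaussianPair X Y ρ P) (hρ : ρ ∈ Set.Icc (-1) 1) :
    ∫ ω, X ω ^ 2 * Y ω ^ 2 ∂P = 1 + 2 * ρ ^ 2 := by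
  have hS := h.integral_pow 1 1 4
  have hD := h.integral_pow 1 (-1) 4
  rw [integral_mul_add_mul_pow h.integrable_pow_mul_pow, integral_pow_four_gaussianReal,
    Real.coe_toNNReal _ (by linarith [hρ.1])] at hS
  rw [integral_mul_add_mul_pow h.integrable_pow_mul_pow, integral_pow_four_gaussianReal,
    Real.coe_toNNReal _ (by linarith [hρ.2])] at hD
  have hX4 := (h.integral_fst_pow 4).trans (integral_pow_four_gaussianReal 1)
  have hY4 := (h.swap.integral_fst_pow 4).trans (integral_pow_four_gaussianReal 1)
  have hS' : 3 + 4 * ∫ ω, X ω * Y ω ^ 3 ∂P + 6 * ∫ ω, X ω ^ 2 * Y ω ^ 2 ∂P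
      + 4 * ∫ ω, X ω ^ 3 * Y ω ∂P + 3 = 3 * (2 + 2 * ρ) ^ 2 := by
    simpa [sum_range_succ, Nat.choose, hX4, hY4, one_add_one_eq_two] using hS
  have hD' : 3 - 4 * ∫ ω, X ω * Y ω ^ 3 ∂P + 6 * ∫ ω, X ω ^ 2 * Y ω ^ 2 ∂P
      - 4 * ∫ ω, X ω ^ 3 * Y ω ∂P + 3 = 3 * (2 - 2 * ρ) ^ 2 := by
    simpa [sum_range_succ, Nat.choose, hX4, hY4, one_add_one_eq_two, sub_eq_add_neg,
      Even.neg_one_pow (by decide : Even 4), Odd.neg_one_pow (by decide : Odd 3)] using hD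
  linear_combination (hS' + hD') / 12

lemma memLp_add_mul_add_sq (h : IsStdGaussianPair X Y ρ P) (a b c : ℝ) :
    MemLp (fun ω => a + b * (X ω + c) ^ 2) 2 P := by
  rw [add_mul_add_sq_eq_sum]
  exact memLp_finsetSum _ fun (i : Fin 3) _ => (h.memLp_pow i).const_mul _

lemma covariance_pow_pow [IsProbabilityMeasure P] (h : IsStdGaussianPair X Y ρ P) (i j : ℕ) :
    cov[fun ω => X ω ^ i, fun ω => Y ω ^ j; P]
      = ∫ ω, X ω ^ i * Y ω ^ j ∂P - (∫ ω, X ω ^ i ∂P) * ∫ ω, Y ω ^ j ∂P :=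
  covariance_eq_sub (h.memLp_pow i) (h.swap.memLp_pow j)

theorem covariance_add_mul_add_sq [IsProbabilityMeasure P] (h : IsStdGaussianPair X Y ρ P)
    (hρ : ρ ∈ Set.Icc (-1) 1) (a b c a' b' c' : ℝ) :
    cov[fun ω => a + b * (X ω + c) ^ 2, fun ω => a' + b' * (Y ω + c') ^ 2; P]
      = 2 * b * b' * ρ * (ρ + 2 * c * c') := by
  rw [add_mul_add_sq_eq_sum X, add_mul_add_sq_eq_sum Y, covariance_fun_sum_fun_sum
    (fun (i : Fin 3) => (h.memLp_pow i).const_mul _)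
    (fun (j : Fin 3) => (h.swap.memLp_pow j).const_mul _)]
  simp only [Fin.sum_univ_three, covariance_const_mul_left, covariance_const_mul_right,
    h.covariance_pow_pow]
  simp only [Fin.isValue, Matrix.cons_val_zero, Matrix.cons_val_one, Matrix.cons_val,
    Fin.coe_ofNat_eq_mod, Nat.zero_mod, Nat.one_mod, Nat.mod_succ, pow_zero, pow_one, one_mul,
    mul_one, integral_const, probReal_univ, smul_eq_mul, NNReal.coe_one, integral_sq_gaussianReal,
    h.integral_fst, h.swap.integral_fst, h.integral_fst_pow, h.swap.integral_fst_pow,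
    h.integral_mul hρ.1, h.integral_sq_mul, h.integral_mul_sq, h.integral_sq_mul_sq hρ]
  ring

end IsStdGaussianPair

theorem stmt8_general {Ω : Type*} [MeasurableSpace Ω] (P : Measure Ω) [IsProbabilityMeasure P]
    (X Y : Ω → ℝ)
    (ρ : ℝ) (hρ : ρ ∈ Set.Ioo (-1 : ℝ) 1)
    -- (X,Y) is a centered Gaussian vector with Var X = Var Y = 1, Cov(X,Y) = ρ
    (hGauss : ∀ s t : ℝ, Measure.map (fun ω => s * X ω + t * Y ω) P
      = gaussianReal 0 (Real.toNNReal (s ^ 2 + t ^ 2 + 2 * s * t * ρ)))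
    (a b c : ℝ) (hb : b ≠ 0)
    (T T' : Ω → ℝ)
    (hT : T = fun ω => a + b * (X ω + c) ^ 2)
    (hT' : T' = fun ω => a + b * (Y ω + c) ^ 2) :
    ((∫ ω, T ω * T' ω ∂P) - (∫ ω, T ω ∂P) * ∫ ω, T' ω ∂P)
        / Real.sqrt (variance T P * variance T' P)
      = (ρ ^ 2 + 2 * c ^ 2 * ρ) / (1 + 2 * c ^ 2) := by
  have h : IsStdGaussianPair X Y ρ P := hGauss
  have hone : (1 : ℝ) ∈ Set.Icc (-1) 1 := by norm_num
  have hTm := h.memLp_add_mul_add_sq a b c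
  have hT'm := h.swap.memLp_add_mul_add_sq a b c
  subst hT hT'
  have hcov := covariance_eq_sub hTm hT'm
  simp only [Pi.mul_apply] at hcov
  have hvarT : Var[fun ω => a + b * (X ω + c) ^ 2; P] = 2 * b ^ 2 * (1 + 2 * c ^ 2) := by
    rw [← covariance_self hTm.aemeasurable,
      (IsStdGaussianPair.of_hasLaw h.hasLaw_fst).covariance_add_mul_add_sq hone]
    ring
  have hvarT' : Var[fun ω => a + b * (Y ω + c) ^ 2; P] = 2 * b ^ 2 * (1 + 2 * c ^ 2) := by
    rw [← covariance_self hT'm.aemeasurable,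
      (IsStdGaussianPair.of_hasLaw h.swap.hasLaw_fst).covariance_add_mul_add_sq hone]
    ring
  rw [← hcov, h.covariance_add_mul_add_sq (Set.Ioo_subset_Icc_self hρ), hvarT, hvarT',
    Real.sqrt_mul_self (by positivity)]
  field_simp

/-- Correlation of `T = a + b(X+c)²` and `T' = a + b(Y+c)²` for a centered Gaussian
vector `(X,Y)` with unit variances and correlation `ρ`:
`Cor(T,T') = (ρ² + 2c²ρ)/(1 + 2c²)`.
The Gaussian vector hypothesis is expressed through the laws of all linear
combinations `sX + tY`. -/
theorem stmt8 {Ω : Type*} [MeasurableSpace Ω] (P : Measure Ω) [IsProbabilityMeasure P]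
    (X Y : Ω → ℝ) (hX : Measurable X) (hY : Measurable Y)
    (ρ : ℝ) (hρ : ρ ∈ Set.Ioo (-1 : ℝ) 1)
    -- (X,Y) is a centered Gaussian vector with Var X = Var Y = 1, Cov(X,Y) = ρ
    (hGauss : ∀ s t : ℝ, Measure.map (fun ω => s * X ω + t * Y ω) P
      = gaussianReal 0 (Real.toNNReal (s ^ 2 + t ^ 2 + 2 * s * t * ρ)))
    (a b c : ℝ) (hb : b ≠ 0)
    (T T' : Ω → ℝ)
    (hT : T = fun ω => a + b * (X ω + c) ^ 2)
    (hT' : T' = fun ω => a + b * (Y ω + c) ^ 2) :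
    ((∫ ω, T ω * T' ω ∂P) - (∫ ω, T ω ∂P) * ∫ ω, T' ω ∂P)
        / Real.sqrt (variance T P * variance T' P)
      = (ρ ^ 2 + 2 * c ^ 2 * ρ) / (1 + 2 * c ^ 2) :=
  stmt8_general P X Y ρ hρ hGauss a b c hb T T' hT hT'
end
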